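/- A code C ⊆ Z_q^n can correct t insertions of blocks 0^k if and only if it can correct any combination of t_ins insertions and t_del deletions of blocks 0^k with t_ins + t_del ≤ t. -/

import Mathlib

/-- One insertion of a block `0^k` at some position of the string `x`. -/
def Ins (q k : ℕ) (x y : List (ZMod q)) : Prop :=
  ∃ j ≤ x.length, y = x.take j ++ List.replicate k (0 : ZMod q) ++ x.drop j

/-- One deletion of a block of `k` consecutive zeros. -/
def Del (q k : ℕ) (x y : List (ZMod q)) : Prop := Ins q k y x

/-- `IndelN q k a b x y`: `y` is obtainable from `x` by `a` insertions and `b`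
deletions of blocks `0^k`, performed in any order. -/
inductive IndelN (q k : ℕ) : ℕ → ℕ → List (ZMod q) → List (ZMod q) → Prop
  | refl (x : List (ZMod q)) : IndelN q k 0 0 x x
  | ins {a b : ℕ} {x z y : List (ZMod q)} :
      Ins q k x z → IndelN q k a b z y → IndelN q k (a + 1) b x y
  | del {a b : ℕ} {x z y : List (ZMod q)} :
      Del q k x z → IndelN q k a b z y → IndelN q k a (b + 1) x y

/-- `C` corrects `t` insertions of blocks `0^k`. -/
def CorrectsIns (q k t : ℕ) (C : Set (List (ZMod q))) : Prop :=
  ∀ x ∈ C, ∀ x' ∈ C, ∀ y,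
    (∃ u ≤ t, IndelN q k u 0 x y) → (∃ u' ≤ t, IndelN q k u' 0 x' y) → x = x'

/-- `C` corrects any combination of `t_ins` insertions and `t_del` deletions of
blocks `0^k` with `t_ins + t_del ≤ t`. -/
def CorrectsIndel (q k t : ℕ) (C : Set (List (ZMod q))) : Prop :=
  ∀ x ∈ C, ∀ x' ∈ C, ∀ y,
    (∃ a b, a + b ≤ t ∧ IndelN q k a b x y) →
    (∃ a b, a + b ≤ t ∧ IndelN q k a b x' y) → x = x'

/-!
Insertions of `0^k` commute: two insertions into the same string can be completed to a common
string by one more insertion each. Hence sequences of insertions are confluent, and a deletion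
can be traded for an insertion on the other side, so a path `x → y` with `a` insertions and `b`
deletions yields a string reached from `x` by `a` and from `y` by `b` insertions. Two such paths
`x → y ← x'` then meet in a string reached from `x` by `a + b'` and from `x'` by `a' + b`
insertions, and since `|x| = |x'|`, counting lengths gives `a + b' = a' + b ≤ t`.
-/

theorem ins_iff_exists_append {q k : ℕ} {x y : List (ZMod q)} :
    Ins q k x y ↔ ∃ s t : List (ZMod q), x = s ++ t ∧ y = s ++ List.replicate k 0 ++ t := by
  constructor
  · rintro ⟨j, -, rfl⟩
    exact ⟨x.take j, x.drop j, (List.take_append_drop j x).symm, rfl⟩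
  · rintro ⟨s, t, rfl, rfl⟩
    exact ⟨s.length, by simp, by simp⟩

theorem Ins.length_eq {q k : ℕ} {x y : List (ZMod q)} (h : Ins q k x y) :
    y.length = x.length + k := by
  obtain ⟨s, t, rfl, rfl⟩ := ins_iff_exists_append.mp h
  simp only [List.length_append, List.length_replicate]
  omega

theorem Ins.diamond {q k : ℕ} {u x y : List (ZMod q)} (hx : Ins q k u x) (hy : Ins q k u y) :
    ∃ w, Ins q k x w ∧ Ins q k y w := by
  obtain ⟨s₁, t₁, rfl, rfl⟩ := ins_iff_exists_append.mp hx
  obtain ⟨s₂, t₂, hu, rfl⟩ := ins_iff_exists_append.mp hy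
  simp only [ins_iff_exists_append]
  set B := List.replicate k (0 : ZMod q)
  rcases List.append_eq_append_iff.mp hu with ⟨m, rfl, rfl⟩ | ⟨m, rfl, rfl⟩
  · exact ⟨s₁ ++ B ++ m ++ B ++ t₂, ⟨s₁ ++ B ++ m, t₂, by simp, by simp⟩,
      ⟨s₁, m ++ B ++ t₂, by simp, by simp⟩⟩
  · exact ⟨s₂ ++ B ++ m ++ B ++ t₁, ⟨s₂, m ++ B ++ t₁, by simp, by simp⟩,
      ⟨s₂ ++ B ++ m, t₁, by simp, by simp⟩⟩

namespace IndelN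

variable {q k : ℕ}

theorem trans {a b c d : ℕ} {x y z : List (ZMod q)} (hxy : IndelN q k a b x y)
    (hyz : IndelN q k c d y z) : IndelN q k (a + c) (b + d) x z := by
  induction hxy with
  | refl => simpa using hyz
  | ins h _ ih => simpa only [Nat.add_right_comm] using ins h (ih hyz)
  | del h _ ih => simpa only [Nat.add_right_comm] using del h (ih hyz)

theorem length_add_mul {a b : ℕ} {x y : List (ZMod q)} (h : IndelN q k a b x y) :
    y.length + b * k = x.length + a * k := by
  induction h with
  | refl => rfl
  | ins h _ ih => have := h.length_eq; rw [Nat.add_mul]; omega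
  | del h _ ih => have := h.length_eq; rw [Nat.add_mul]; omega

theorem add_eq_add_of_length_eq {a b a' b' : ℕ} {x x' y : List (ZMod q)} (hk : 0 < k)
    (h : IndelN q k a b x y) (h' : IndelN q k a' b' x' y) (hlen : x.length = x'.length) :
    a + b' = a' + b := by
  have e := h.length_add_mul
  have e' := h'.length_add_mul
  have hmul : (a + b') * k = (a' + b) * k := by simp only [Nat.add_mul]; omega
  exact Nat.eq_of_mul_eq_mul_right hk hmul

theorem ins_strip {m : ℕ} {u x z : List (ZMod q)} (huz : IndelN q k m 0 u z)
    (hux : Ins q k u x) : ∃ w, IndelN q k m 0 x w ∧ Ins q k z w := by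
  generalize hb : 0 = b at huz
  induction huz generalizing x with
  | refl => exact ⟨x, refl x, hux⟩
  | ins h _ ih =>
    obtain ⟨p, hxp, hp⟩ := hux.diamond h
    obtain ⟨w, hpw, hw⟩ := ih hp hb
    exact ⟨w, ins hxp hpw, hw⟩
  | del => omega

theorem ins_confluence {m m' : ℕ} {u x z : List (ZMod q)} (hux : IndelN q k m 0 u x)
    (huz : IndelN q k m' 0 u z) : ∃ w, IndelN q k m' 0 x w ∧ IndelN q k m 0 z w := by
  generalize hb : 0 = b at hux
  induction hux generalizing z with
  | refl => exact ⟨z, huz, refl z⟩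
  | ins h _ ih =>
    obtain ⟨p, hp, hzp⟩ := huz.ins_strip h
    obtain ⟨w, hxw, hpw⟩ := ih hp hb
    exact ⟨w, hxw, ins hzp hpw⟩
  | del => omega

theorem exists_ins_of_indel {a b : ℕ} {x y : List (ZMod q)} (h : IndelN q k a b x y) :
    ∃ z, IndelN q k a 0 x z ∧ IndelN q k b 0 y z := by
  induction h with
  | refl x => exact ⟨x, refl x, refl x⟩
  | ins h _ ih =>
    obtain ⟨z, hz, hyz⟩ := ih
    exact ⟨z, ins h hz, hyz⟩
  | del h _ ih =>
    obtain ⟨z, hz, hyz⟩ := ih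
    obtain ⟨w, hw, hzw⟩ := hz.ins_strip h
    simpa using ⟨w, hw, hyz.trans (ins hzw (refl w))⟩

theorem exists_common_ins {a b a' b' : ℕ} {x x' y : List (ZMod q)}
    (h : IndelN q k a b x y) (h' : IndelN q k a' b' x' y) :
    ∃ w, IndelN q k (a + b') 0 x w ∧ IndelN q k (a' + b) 0 x' w := by
  obtain ⟨z, hxz, hyz⟩ := h.exists_ins_of_indel
  obtain ⟨z', hxz', hyz'⟩ := h'.exists_ins_of_indel
  obtain ⟨w, hzw, hz'w⟩ := hyz.ins_confluence hyz'
  exact ⟨w, by simpa using hxz.trans hzw, by simpa using hxz'.trans hz'w⟩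

end IndelN

theorem stmt4_general (q n t k : ℕ) (hk : 1 ≤ k)
    (C : Set (List (ZMod q))) (hC : ∀ x ∈ C, x.length = n) :
    CorrectsIns q k t C ↔ CorrectsIndel q k t C := by
  constructor
  · rintro hC_ins x hx x' hx' y ⟨a, b, hab, h⟩ ⟨a', b', hab', h'⟩
    obtain ⟨w, hxw, hx'w⟩ := h.exists_common_ins h'
    have hcount := h.add_eq_add_of_length_eq hk h' (by rw [hC x hx, hC x' hx'])
    exact hC_ins x hx x' hx' w ⟨a + b', by omega, hxw⟩ ⟨a' + b, by omega, hx'w⟩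
  · rintro hC_indel x hx x' hx' y ⟨u, hu, h⟩ ⟨u', hu', h'⟩
    exact hC_indel x hx x' hx' y ⟨u, 0, by omega, h⟩ ⟨u', 0, by omega, h'⟩

/-- a code `C ⊆ (ℤ_q)^n` corrects `t` insertions of blocks `0^k`
iff it corrects any combination of insertions and deletions of blocks `0^k`
with at most `t` errors in total. -/
theorem stmt4 (q n t k : ℕ) (hq : 2 ≤ q) (hn : 1 ≤ n) (ht : 1 ≤ t) (hk : 1 ≤ k)
    (C : Set (List (ZMod q))) (hC : ∀ x ∈ C, x.length = n) :
    CorrectsIns q k t C ↔ CorrectsIndel q k t C :=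
  stmt4_general q n t k hk C hC
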